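/- Let D=(V,E) be a finite multidigraph and let e be an arc of D. If e is a loop then π̂(D;x,y) = π̂(D_{-e};x,y); if e is not a loop then π̂(D;x,y) = π̂(D_{-e};x,y) + x·π̂(D_{/e};x,y) + x·(y−1)·π̂(D_{†e};x,y). -/

import Mathlib

/-!
Split the path forests `F` of `D` according to whether they contain `e`. Those avoiding `e`
are the path forests of `D_{-e}`, and a loop lies in no path forest. For a non-loop
`e = (u,v)`, `F ↦ F \ {e}` is a bijection onto the path forests of `D_{/e}`: one arc is lost,
and `kp` drops by one exactly when `e` is a path component of `D⟨F⟩` on its own, that is, when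
`F \ {e}` has no arc into `u` and none out of `v`; such arc sets are precisely the path
forests of `D_{†e}`.

Acyclicity is transported through the contraction by replacing directed cycles with
nonempty arc sets in which every arc is followed by an arc of the set: an arc set contains a
directed cycle iff it contains such a set, and these sets behave simply under contraction.
-/

open Classical

/-- A finite multidigraph: a finite set `V` of vertices (natural numbers),
a finite set `A` of arc identifiers, and a map `ends` assigning to each arc
identifier its (source, target) pair of vertices.  Parallel arcs are distinct
identifiers with the same endpoints; loops are arcs with equal endpoints. -/
structure MDigraph where
  V : Finset ℕ
  A : Finset ℕ
  ends : ℕ → ℕ × ℕ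

namespace MDigraph

/-- Every arc has both endpoints in the vertex set. -/
def WellFormed (D : MDigraph) : Prop :=
  ∀ a ∈ D.A, (D.ends a).1 ∈ D.V ∧ (D.ends a).2 ∈ D.V

/-- An arc is a loop if its source equals its target. -/
def IsLoop (D : MDigraph) (e : ℕ) : Prop := (D.ends e).1 = (D.ends e).2

/-- Arc deletion `D_{-e}`. -/
def delArc (D : MDigraph) (e : ℕ) : MDigraph := ⟨D.V, D.A.erase e, D.ends⟩

/-- Arc contraction `D_{/e}`.  For a non-loop arc `e = (u,v)`: merge `u` and `v`
into a single vertex (named `u`), removing exactly the arcs of the form `(u,x)`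
and `(y,v)`.  For a loop `e = (u,u)`: delete `u` together with all incident arcs. -/
noncomputable def contractArc (D : MDigraph) (e : ℕ) : MDigraph :=
  let u := (D.ends e).1
  let v := (D.ends e).2
  if u = v then
    ⟨D.V.erase u, D.A.filter (fun a => (D.ends a).1 ≠ u ∧ (D.ends a).2 ≠ u), D.ends⟩
  else
    ⟨D.V.erase v, D.A.filter (fun a => (D.ends a).1 ≠ u ∧ (D.ends a).2 ≠ v),
      fun a => ((if (D.ends a).1 = v then u else (D.ends a).1),
                (if (D.ends a).2 = v then u else (D.ends a).2))⟩

/-- Arc extraction `D_{†e}`: delete both endpoints of `e` and all arcs incident to them. -/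
noncomputable def extractArc (D : MDigraph) (e : ℕ) : MDigraph :=
  let u := (D.ends e).1
  let v := (D.ends e).2
  ⟨(D.V.erase u).erase v,
   D.A.filter (fun a =>
     (D.ends a).1 ≠ u ∧ (D.ends a).1 ≠ v ∧ (D.ends a).2 ≠ u ∧ (D.ends a).2 ≠ v),
   D.ends⟩

/-- Add one new arc with endpoints `p` (using a fresh arc identifier). -/
noncomputable def addArc (D : MDigraph) (p : ℕ × ℕ) : MDigraph :=
  ⟨D.V, insert (D.A.sup id + 1) D.A, Function.update D.ends (D.A.sup id + 1) p⟩

/-- Vertex deletion `D_{-v}`. -/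
noncomputable def delVertex (D : MDigraph) (v : ℕ) : MDigraph :=
  ⟨D.V.erase v, D.A.filter (fun a => (D.ends a).1 ≠ v ∧ (D.ends a).2 ≠ v), D.ends⟩

/-- Vertex contraction `D_{/v}`: delete `v`, and for every arc `(u,v)` into `v`
and every arc `(v,w)` out of `v` add a new arc `(u,w)`; thus the multiplicity of
a new arc `(u,w)` is the multiplicity of `(u,v)` times that of `(v,w)`. -/
noncomputable def contractVertex (D : MDigraph) (v : ℕ) : MDigraph :=
  ⟨D.V.erase v,
   ((D.A.filter (fun a => (D.ends a).1 ≠ v ∧ (D.ends a).2 ≠ v)).image (fun a => 2 * a)) ∪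
     (((D.A.filter (fun a => (D.ends a).2 = v)) ×ˢ (D.A.filter (fun a => (D.ends a).1 = v))).image
       (fun p => 2 * Nat.pair p.1 p.2 + 1)),
   fun n =>
     if n % 2 = 0 then D.ends (n / 2)
     else ((D.ends (Nat.unpair ((n - 1) / 2)).1).1, (D.ends (Nat.unpair ((n - 1) / 2)).2).2)⟩

/-- The arc-less digraph on `n` vertices. -/
def emptyD (n : ℕ) : MDigraph := ⟨Finset.range n, ∅, fun _ => (0, 0)⟩

/-- Disjoint union of two multidigraphs (vertices and arcs relabelled evenly/oddly). -/
noncomputable def disjUnion (D₁ D₂ : MDigraph) : MDigraph :=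
  ⟨(D₁.V.image (fun v => 2 * v)) ∪ (D₂.V.image (fun v => 2 * v + 1)),
   (D₁.A.image (fun a => 2 * a)) ∪ (D₂.A.image (fun a => 2 * a + 1)),
   fun n =>
     if n % 2 = 0 then (2 * (D₁.ends (n / 2)).1, 2 * (D₁.ends (n / 2)).2)
     else (2 * (D₂.ends (n / 2)).1 + 1, 2 * (D₂.ends (n / 2)).2 + 1)⟩

/-- Isomorphism of multidigraphs. -/
def Iso (D₁ D₂ : MDigraph) : Prop :=
  ∃ φ ψ : ℕ → ℕ, Set.BijOn φ ↑D₁.V ↑D₂.V ∧ Set.BijOn ψ ↑D₁.A ↑D₂.A ∧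
    ∀ a ∈ D₁.A, D₂.ends (ψ a) = (φ (D₁.ends a).1, φ (D₁.ends a).2)

/-- `C` is (the arc set of) a directed cycle of length `k` in `D`: `k` distinct arcs
forming a closed directed walk through `k` distinct vertices (`k ≥ 1`;
a loop is a directed cycle of length 1). -/
def IsCycle (D : MDigraph) (C : Finset ℕ) (k : ℕ) : Prop :=
  1 ≤ k ∧ ∃ v a : ℕ → ℕ,
    (∀ i j, i < k → j < k → v i = v j → i = j) ∧
    (∀ i j, i < k → j < k → a i = a j → i = j) ∧
    (∀ i, i < k → a i ∈ D.A ∧ D.ends (a i) = (v i, v ((i + 1) % k))) ∧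
    C = (Finset.range k).image a

/-- `P` is (the arc set of) a directed path of length `k` in `D`: `k` distinct arcs
forming a directed walk through `k+1` distinct vertices (`k ≥ 1`). -/
def IsPath (D : MDigraph) (P : Finset ℕ) (k : ℕ) : Prop :=
  1 ≤ k ∧ ∃ v a : ℕ → ℕ,
    (∀ i j, i ≤ k → j ≤ k → v i = v j → i = j) ∧
    (∀ i j, i < k → j < k → a i = a j → i = j) ∧
    (∀ i, i < k → a i ∈ D.A ∧ D.ends (a i) = (v i, v (i + 1))) ∧
    P = (Finset.range k).image a

/-- Number `c_k(D)` of directed cycles of length `k`. -/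
noncomputable def cycCount (D : MDigraph) (k : ℕ) : ℕ :=
  (D.A.powerset.filter (fun C => IsCycle D C k)).card

/-- Number `p_k(D)` of directed paths of length `k`. -/
noncomputable def pathCount (D : MDigraph) (k : ℕ) : ℕ :=
  (D.A.powerset.filter (fun P => IsPath D P k)).card

/-- The cycle polynomial `σ(D;x) = ∑_k c_k(D) x^k`. -/
noncomputable def cyclePoly (D : MDigraph) : Polynomial ℝ :=
  ∑ k ∈ Finset.range (D.A.card + 1), (cycCount D k : ℝ) • Polynomial.X ^ k

/-- The path polynomial `π(D;x) = ∑_k p_k(D) x^k`. -/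
noncomputable def pathPoly (D : MDigraph) : Polynomial ℝ :=
  ∑ k ∈ Finset.range (D.A.card + 1), (pathCount D k : ℝ) • Polynomial.X ^ k


/-- Out-degree of `v`: arcs with tail `v`, counted with multiplicity. -/
noncomputable def outDeg (D : MDigraph) (v : ℕ) : ℕ :=
  (D.A.filter (fun a => (D.ends a).1 = v)).card

/-- In-degree of `v`: arcs with head `v`, counted with multiplicity. -/
noncomputable def inDeg (D : MDigraph) (v : ℕ) : ℕ :=
  (D.A.filter (fun a => (D.ends a).2 = v)).card

/-- `P` is a directed path of length `k` in `D` beginning at `v0`. -/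
def IsPathFrom (D : MDigraph) (v0 : ℕ) (P : Finset ℕ) (k : ℕ) : Prop :=
  1 ≤ k ∧ ∃ v a : ℕ → ℕ, v 0 = v0 ∧
    (∀ i j, i ≤ k → j ≤ k → v i = v j → i = j) ∧
    (∀ i j, i < k → j < k → a i = a j → i = j) ∧
    (∀ i, i < k → a i ∈ D.A ∧ D.ends (a i) = (v i, v (i + 1))) ∧
    P = (Finset.range k).image a

/-- `P` is a directed path of length `k` in `D` ending at `v0`. -/
def IsPathTo (D : MDigraph) (v0 : ℕ) (P : Finset ℕ) (k : ℕ) : Prop :=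
  1 ≤ k ∧ ∃ v a : ℕ → ℕ, v k = v0 ∧
    (∀ i j, i ≤ k → j ≤ k → v i = v j → i = j) ∧
    (∀ i j, i < k → j < k → a i = a j → i = j) ∧
    (∀ i, i < k → a i ∈ D.A ∧ D.ends (a i) = (v i, v (i + 1))) ∧
    P = (Finset.range k).image a

/-- `p_k(D,v,+)`: number of directed paths of length `k` beginning at `v`. -/
noncomputable def pathFromCount (D : MDigraph) (v : ℕ) (k : ℕ) : ℕ :=
  (D.A.powerset.filter (fun P => IsPathFrom D v P k)).card

/-- `p_k(D,v,−)`: number of directed paths of length `k` ending at `v`. -/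
noncomputable def pathToCount (D : MDigraph) (v : ℕ) (k : ℕ) : ℕ :=
  (D.A.powerset.filter (fun P => IsPathTo D v P k)).card

/-- `π_{v+}(D;x) = ∑_k p_k(D,v,+) x^k`. -/
noncomputable def pathFromPoly (D : MDigraph) (v : ℕ) : Polynomial ℝ :=
  ∑ k ∈ Finset.range (D.A.card + 1), (pathFromCount D v k : ℝ) • Polynomial.X ^ k

/-- `π_{v-}(D;x) = ∑_k p_k(D,v,−) x^k`. -/
noncomputable def pathToPoly (D : MDigraph) (v : ℕ) : Polynomial ℝ :=
  ∑ k ∈ Finset.range (D.A.card + 1), (pathToCount D v k : ℝ) • Polynomial.X ^ k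

/-- In the spanning subgraph `D⟨F⟩`, every vertex has out-degree ≤ 1 and
in-degree ≤ 1; equivalently, every component of `D⟨F⟩` is a directed cycle,
a directed path, or an isolated vertex. -/
def DegOK (D : MDigraph) (F : Finset ℕ) : Prop :=
  ∀ w : ℕ, (F.filter (fun a => (D.ends a).1 = w)).card ≤ 1 ∧
    (F.filter (fun a => (D.ends a).2 = w)).card ≤ 1

/-- `kc(D⟨F⟩)`: the number of components of the spanning subgraph `D⟨F⟩` that are
directed cycles (for degree-constrained `F`, these are exactly the directed
cycles contained in `F`). -/
noncomputable def kcF (D : MDigraph) (F : Finset ℕ) : ℕ :=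
  (F.powerset.filter (fun C => ∃ k, IsCycle D C k)).card

/-- `kp(D⟨F⟩)`: the number of components of the spanning subgraph `D⟨F⟩` that are
directed paths with at least one arc (for degree-constrained `F`, counted by
their initial vertices: vertices that are the tail of an arc of `F` but the
head of no arc of `F`). -/
noncomputable def kpF (D : MDigraph) (F : Finset ℕ) : ℕ :=
  ((F.image (fun a => (D.ends a).1)).filter
    (fun w => (F.filter (fun a => (D.ends a).2 = w)).card = 0)).card

/-- The number of vertices covered by (incident to) the arcs of `F`. -/
noncomputable def coveredCard (D : MDigraph) (F : Finset ℕ) : ℕ :=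
  ((F.image (fun a => (D.ends a).1)) ∪ (F.image (fun a => (D.ends a).2))).card

/-- `k(D⟨F⟩)`: total number of connected components of the spanning subgraph
`D⟨F⟩` (isolated vertices included), for degree-constrained `F` in a
well-formed digraph. -/
noncomputable def kF (D : MDigraph) (F : Finset ℕ) : ℕ :=
  D.V.card - coveredCard D F + kcF D F + kpF D F

/-- `c(D⟨F⟩)`: number of covered components (components with at least one arc). -/
noncomputable def cF (D : MDigraph) (F : Finset ℕ) : ℕ := kcF D F + kpF D F

/-- `c₁(D⟨F⟩)`: number of loops in `F`. -/
noncomputable def loopCount (D : MDigraph) (F : Finset ℕ) : ℕ :=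
  (F.filter (fun a => (D.ends a).1 = (D.ends a).2)).card

/-- The bivariate cycle polynomial
`σ̂(D;x,y) = ∑_F x^{|F|} y^{kc(D⟨F⟩)}`, the sum being over all arc subsets `F`
such that every component of `D⟨F⟩` is a directed cycle or an isolated vertex. -/
noncomputable def biCycPoly (D : MDigraph) : MvPolynomial (Fin 2) ℝ :=
  ∑ F ∈ D.A.powerset.filter (fun F => DegOK D F ∧ kpF D F = 0),
    MvPolynomial.X 0 ^ F.card * MvPolynomial.X 1 ^ kcF D F

/-- The bivariate path polynomial
`π̂(D;x,y) = ∑_F x^{|F|} y^{kp(D⟨F⟩)}`, the sum being over all arc subsets `F`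
such that every component of `D⟨F⟩` is a directed path or an isolated vertex. -/
noncomputable def biPathPoly (D : MDigraph) : MvPolynomial (Fin 2) ℝ :=
  ∑ F ∈ D.A.powerset.filter (fun F => DegOK D F ∧ kcF D F = 0),
    MvPolynomial.X 0 ^ F.card * MvPolynomial.X 1 ^ kpF D F

/-- The trivariate cycle-path polynomial
`σ̂π(D;x,y,z) = ∑_F x^{|F|} y^{kc(D⟨F⟩)} z^{kp(D⟨F⟩)}`, the sum being over all
arc subsets `F` in which every vertex has in- and out-degree at most 1. -/
noncomputable def triPoly (D : MDigraph) : MvPolynomial (Fin 3) ℝ :=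
  ∑ F ∈ D.A.powerset.filter (fun F => DegOK D F),
    MvPolynomial.X 0 ^ F.card * MvPolynomial.X 1 ^ kcF D F * MvPolynomial.X 2 ^ kpF D F

/-- The geometric cover polynomial `C̃(D;x,y) = ∑_{i,j} c_{i,j}(D) x^i y^j`,
where `c_{i,j}(D)` is the number of ways of disjointly covering all vertices of
`D` with `i` directed paths and `j` directed cycles (isolated vertices counting
as paths of length 0): a cover is an arc subset `F` with all in- and out-degrees
at most 1, contributing `j = kc(D⟨F⟩)` cycles and
`i = kp(D⟨F⟩) + (number of uncovered vertices)` paths. -/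
noncomputable def geomCover (D : MDigraph) (x y : ℝ) : ℝ :=
  ∑ F ∈ D.A.powerset.filter (fun F => DegOK D F),
    x ^ (kpF D F + (D.V.card - coveredCard D F)) * y ^ kcF D F

/-- No vertex is incident both to an arc of `A` and to an arc of `B`. -/
def NoCommonVertex (D : MDigraph) (A B : Finset ℕ) : Prop :=
  ∀ a ∈ A, ∀ b ∈ B,
    (D.ends a).1 ≠ (D.ends b).1 ∧ (D.ends a).1 ≠ (D.ends b).2 ∧
    (D.ends a).2 ≠ (D.ends b).1 ∧ (D.ends a).2 ≠ (D.ends b).2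

/-- The explicit polynomial
`N(D;x,y,z) = ∑_{(A,B)} x^{k(D⟨A∪B⟩)−c(D⟨B⟩)−c₁(D⟨A⟩)} y^{|A|+|B|−c(D⟨B⟩)} z^{c(D⟨B⟩)}`,
summing over pairs of disjoint arc subsets `A, B` sharing no vertex such that
every component of `D⟨A∪B⟩` is a directed cycle, a directed path or an isolated
vertex. -/
noncomputable def NPoly (D : MDigraph) : MvPolynomial (Fin 3) ℝ :=
  ∑ p ∈ (D.A.powerset ×ˢ D.A.powerset).filter
      (fun p => Disjoint p.1 p.2 ∧ NoCommonVertex D p.1 p.2 ∧ DegOK D (p.1 ∪ p.2)),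
    MvPolynomial.X 0 ^ (kF D (p.1 ∪ p.2) - cF D p.2 - loopCount D p.1) *
      MvPolynomial.X 1 ^ (p.1.card + p.2.card - cF D p.2) *
      MvPolynomial.X 2 ^ cF D p.2

end MDigraph

/-- A finite undirected graph: a finite vertex set and a finite set of
unordered pairs as edges. -/
structure SGraph where
  V : Finset ℕ
  E : Finset (Sym2 ℕ)

namespace SGraph

/-- `G` is a simple graph: no loops, and all edge endpoints are vertices. -/
def Simple (G : SGraph) : Prop :=
  (∀ s ∈ G.E, ¬ s.IsDiag) ∧ ∀ s ∈ G.E, ∀ a ∈ s, a ∈ G.V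

/-- `P` is (the edge set of) an undirected path of length `k` in `G`. -/
def IsUPath (G : SGraph) (P : Finset (Sym2 ℕ)) (k : ℕ) : Prop :=
  1 ≤ k ∧ ∃ v : ℕ → ℕ,
    (∀ i j, i ≤ k → j ≤ k → v i = v j → i = j) ∧
    (∀ i, i < k → s(v i, v (i + 1)) ∈ G.E) ∧
    P = (Finset.range k).image (fun i => s(v i, v (i + 1)))

/-- `C` is (the edge set of) an undirected cycle of length `k ≥ 3` in `G`. -/
def IsUCycle (G : SGraph) (C : Finset (Sym2 ℕ)) (k : ℕ) : Prop :=
  3 ≤ k ∧ ∃ v : ℕ → ℕ,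
    (∀ i j, i < k → j < k → v i = v j → i = j) ∧
    (∀ i, i < k → s(v i, v ((i + 1) % k)) ∈ G.E) ∧
    C = (Finset.range k).image (fun i => s(v i, v ((i + 1) % k)))

/-- `p_k(G)`: number of undirected paths of length `k` in `G`. -/
noncomputable def uPathCount (G : SGraph) (k : ℕ) : ℕ :=
  (G.E.powerset.filter (fun P => IsUPath G P k)).card

/-- `c_k(G)`: number of undirected cycles of length `k` in `G`. -/
noncomputable def uCycCount (G : SGraph) (k : ℕ) : ℕ :=
  (G.E.powerset.filter (fun C => IsUCycle G C k)).card

/-- `π(G;x) = ∑_k p_k(G) x^k`. -/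
noncomputable def uPathPoly (G : SGraph) : Polynomial ℝ :=
  ∑ k ∈ Finset.range (G.E.card + 1), (uPathCount G k : ℝ) • Polynomial.X ^ k

/-- `σ(G;x) = ∑_k c_k(G) x^k`. -/
noncomputable def uCycPoly (G : SGraph) : Polynomial ℝ :=
  ∑ k ∈ Finset.range (G.E.card + 1), (uCycCount G k : ℝ) • Polynomial.X ^ k

/-- The digraph `D(G)` obtained from `G` by replacing each edge `{u,v}` by the
two oppositely oriented arcs `(u,v)` and `(v,u)`. -/
noncomputable def toDigraph (G : SGraph) : MDigraph :=
  ⟨G.V, ((G.V ×ˢ G.V).filter (fun p => s(p.1, p.2) ∈ G.E)).image (fun p => Nat.pair p.1 p.2),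
   Nat.unpair⟩

end SGraph


theorem Finset.card_insert_sdiff_insert {α : Type*} [DecidableEq α] {u v : α} {T H : Finset α}
    (huv : u ≠ v) (hu : u ∉ T) :
    (insert u T \ insert v H).card =
      (T.image (fun w => if w = v then u else w) \ H).card +
        if v ∉ T ∧ u ∉ H then 1 else 0 := by
  by_cases hvT : v ∈ T
  · rw [if_neg (fun h => h.1 hvT), add_zero]
    congr 1
    ext w
    simp only [Finset.mem_sdiff, Finset.mem_insert, Finset.mem_image]
    grind
  · have hT : T.image (fun w => if w = v then u else w) = T := by
      conv_rhs => rw [← Finset.image_id (s := T)]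
      exact Finset.image_congr fun w hw => if_neg (ne_of_mem_of_not_mem hw hvT)
    rw [hT]
    by_cases huH : u ∈ H
    · rw [if_neg (fun h => h.2 huH), add_zero]
      congr 1
      ext w
      simp only [Finset.mem_sdiff, Finset.mem_insert]
      grind
    · rw [if_pos ⟨hvT, huH⟩, ← Finset.card_insert_of_notMem (show u ∉ T \ H by simp [hu])]
      congr 1
      ext w
      simp only [Finset.mem_sdiff, Finset.mem_insert]
      grind

namespace MDigraph

def SuccClosed (D : MDigraph) (C : Finset ℕ) : Prop :=
  ∀ a ∈ C, ∃ b ∈ C, (D.ends b).1 = (D.ends a).2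

def IsAcyclic (D : MDigraph) (F : Finset ℕ) : Prop :=
  ∀ C ⊆ F, C.Nonempty → ¬ D.SuccClosed C

noncomputable def pathForests (D : MDigraph) : Finset (Finset ℕ) :=
  D.A.powerset.filter (fun F => DegOK D F ∧ kcF D F = 0)

noncomputable def pathWeight (D : MDigraph) (F : Finset ℕ) : MvPolynomial (Fin 2) ℝ :=
  MvPolynomial.X 0 ^ F.card * MvPolynomial.X 1 ^ kpF D F

theorem biPathPoly_eq_sum (D : MDigraph) :
    D.biPathPoly = ∑ F ∈ D.pathForests, D.pathWeight F :=
  rfl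

section Cycles

variable {D : MDigraph} {C F : Finset ℕ} {k : ℕ}

theorem IsCycle.nonempty (h : D.IsCycle C k) : C.Nonempty := by
  obtain ⟨hk, -, a, -, -, -, rfl⟩ := h
  exact ⟨a 0, Finset.mem_image_of_mem a (Finset.mem_range.2 hk)⟩

theorem IsCycle.succClosed (h : D.IsCycle C k) : D.SuccClosed C := by
  obtain ⟨hk, v, a, -, -, harc, rfl⟩ := h
  simp only [SuccClosed, Finset.forall_mem_image, Finset.exists_mem_image, Finset.mem_range]
  intro i hi
  exact ⟨(i + 1) % k, Nat.mod_lt _ hk, by rw [(harc _ (Nat.mod_lt _ hk)).2, (harc i hi).2]⟩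

/-- Following successors from any arc, the first repeated vertex closes a directed cycle. -/
theorem SuccClosed.exists_isCycle (hCA : C ⊆ D.A) (hC : C.Nonempty) (h : D.SuccClosed C) :
    ∃ C' ⊆ C, ∃ k, D.IsCycle C' k := by
  choose! s hsC hs using h
  obtain ⟨a₀, ha₀⟩ := hC
  set a : ℕ → ℕ := fun n => s^[n] a₀ with ha
  have haC : ∀ n, a n ∈ C := by
    intro n
    induction n with
    | zero => exact ha₀
    | succ n ih => simpa only [ha, Function.iterate_succ_apply'] using hsC _ ih
  set v : ℕ → ℕ := fun n => (D.ends (a n)).1 with hv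
  have hends : ∀ n, D.ends (a n) = (v n, v (n + 1)) := fun n =>
    Prod.ext rfl (by simp only [hv, ha, Function.iterate_succ_apply']; exact (hs _ (haC n)).symm)
  have hrep : ∃ j, ∃ i < j, v i = v j := by
    obtain ⟨x, -, y, -, hxy, hvxy⟩ := Finset.exists_ne_map_eq_of_card_lt_of_maps_to
      (s := Finset.range (C.card + 1)) (t := C.image (fun a => (D.ends a).1))
      (Finset.card_image_le.trans_lt (by simp)) (f := v)
      (fun n _ => Finset.mem_image_of_mem _ (haC n))
    rcases Nat.lt_or_gt_of_ne hxy with hlt | hlt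
    exacts [⟨y, x, hlt, hvxy⟩, ⟨x, y, hlt, hvxy.symm⟩]
  obtain ⟨i, hij, hvij⟩ := Nat.find_spec hrep
  set j := Nat.find hrep
  have hinj : ∀ t t', t < j - i → t' < j - i → v (i + t) = v (i + t') → t = t' := by
    intro t t' ht ht' heq
    by_contra hne
    rcases Nat.lt_or_gt_of_ne hne with hlt | hlt
    · exact Nat.find_min hrep (m := i + t') (by omega) ⟨i + t, by omega, heq⟩
    · exact Nat.find_min hrep (m := i + t) (by omega) ⟨i + t', by omega, heq.symm⟩
  refine ⟨(Finset.range (j - i)).image (fun t => a (i + t)),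
    Finset.image_subset_iff.2 fun t _ => haC _, j - i, by omega,
    fun t => v (i + t), fun t => a (i + t), hinj,
    fun t t' ht ht' heq => hinj t t' ht ht' (by simp only [hv, heq]), fun t ht => ?_, rfl⟩
  refine ⟨hCA (haC _), ?_⟩
  rw [hends]
  rcases Nat.lt_or_ge (t + 1) (j - i) with hlt | hge
  · rw [Nat.mod_eq_of_lt hlt, Nat.add_assoc]
  · refine Prod.ext rfl ?_
    show v (i + t + 1) = v (i + (t + 1) % (j - i))
    rw [show t + 1 = j - i by omega, Nat.mod_self, show i + t + 1 = j by omega]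
    exact hvij.symm

theorem kcF_eq_zero_iff (hF : F ⊆ D.A) : kcF D F = 0 ↔ D.IsAcyclic F := by
  simp only [kcF, Finset.card_eq_zero, Finset.filter_eq_empty_iff, Finset.mem_powerset,
    not_exists]
  constructor
  · intro h C hCF hC hcl
    obtain ⟨C', hC'C, k, hk⟩ := hcl.exists_isCycle (hCF.trans hF) hC
    exact h (hC'C.trans hCF) k hk
  · intro h C hCF k hk
    exact h C hCF hk.nonempty hk.succClosed

theorem mem_pathForests : F ∈ D.pathForests ↔ F ⊆ D.A ∧ DegOK D F ∧ D.IsAcyclic F := by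
  simp only [pathForests, Finset.mem_filter, Finset.mem_powerset]
  constructor
  · rintro ⟨hF, hdeg, hkc⟩
    exact ⟨hF, hdeg, (kcF_eq_zero_iff hF).1 hkc⟩
  · rintro ⟨hF, hdeg, hac⟩
    exact ⟨hF, hdeg, (kcF_eq_zero_iff hF).2 hac⟩

end Cycles

section Congr

variable {D D₁ D₂ : MDigraph} {F : Finset ℕ}

theorem degOK_iff_injOn : DegOK D F ↔
    Set.InjOn (fun a => (D.ends a).1) F ∧ Set.InjOn (fun a => (D.ends a).2) F := by
  simp only [DegOK, Finset.card_le_one, Finset.mem_filter, Set.InjOn, Finset.mem_coe]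
  constructor
  · intro h
    exact ⟨fun a ha b hb hab => (h _).1 a ⟨ha, rfl⟩ b ⟨hb, hab.symm⟩,
      fun a ha b hb hab => (h _).2 a ⟨ha, rfl⟩ b ⟨hb, hab.symm⟩⟩
  · rintro ⟨h₁, h₂⟩ w
    exact ⟨fun a ha b hb => h₁ ha.1 hb.1 (ha.2.trans hb.2.symm),
      fun a ha b hb => h₂ ha.1 hb.1 (ha.2.trans hb.2.symm)⟩

theorem DegOK.mono {F' : Finset ℕ} (h : DegOK D F) (hF' : F' ⊆ F) : DegOK D F' := fun w =>
  ⟨(Finset.card_le_card (Finset.filter_subset_filter _ hF')).trans (h w).1,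
    (Finset.card_le_card (Finset.filter_subset_filter _ hF')).trans (h w).2⟩

theorem kpF_eq_card_sdiff :
    kpF D F = (F.image (fun a => (D.ends a).1) \ F.image (fun a => (D.ends a).2)).card := by
  unfold kpF
  congr 1
  ext w
  simp [Finset.card_eq_zero, Finset.filter_eq_empty_iff]

theorem degOK_congr (h : ∀ a ∈ F, D₁.ends a = D₂.ends a) :
    DegOK D₁ F ↔ DegOK D₂ F := by
  simp only [degOK_iff_injOn]
  rw [Set.EqOn.injOn_iff fun a ha => congrArg Prod.fst (h a ha),
    Set.EqOn.injOn_iff fun a ha => congrArg Prod.snd (h a ha)]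

theorem isAcyclic_congr (h : ∀ a ∈ F, D₁.ends a = D₂.ends a) :
    D₁.IsAcyclic F ↔ D₂.IsAcyclic F := by
  have hC : ∀ C ⊆ F, D₁.SuccClosed C ↔ D₂.SuccClosed C := fun C hCF => by
    simp only [SuccClosed]
    exact forall₂_congr fun a ha => exists_congr fun b => and_congr_right fun hb => by
      rw [h a (hCF ha), h b (hCF hb)]
  exact forall₂_congr fun C hCF => by rw [hC C hCF]

theorem kpF_congr (h : ∀ a ∈ F, D₁.ends a = D₂.ends a) : kpF D₁ F = kpF D₂ F := by
  simp only [kpF_eq_card_sdiff]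
  rw [Finset.image_congr fun a ha => congrArg Prod.fst (h a ha),
    Finset.image_congr fun a ha => congrArg Prod.snd (h a ha)]

end Congr

section Contraction

variable {D : MDigraph} {e f : ℕ} {F C : Finset ℕ}

theorem mem_contractArc_A (hne : ¬ D.IsLoop e) :
    f ∈ (D.contractArc e).A ↔
      f ∈ D.A ∧ (D.ends f).1 ≠ (D.ends e).1 ∧ (D.ends f).2 ≠ (D.ends e).2 := by
  simp [contractArc, show (D.ends e).1 ≠ (D.ends e).2 from hne]

theorem notMem_contractArc_A (hne : ¬ D.IsLoop e) : e ∉ (D.contractArc e).A :=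
  fun h => ((mem_contractArc_A hne).1 h).2.1 rfl

theorem contractArc_ends_fst (hne : ¬ D.IsLoop e) (f : ℕ) :
    ((D.contractArc e).ends f).1 =
      if (D.ends f).1 = (D.ends e).2 then (D.ends e).1 else (D.ends f).1 := by
  simp [contractArc, show (D.ends e).1 ≠ (D.ends e).2 from hne]

theorem contractArc_ends_snd (hne : ¬ D.IsLoop e) (hf : f ∈ (D.contractArc e).A) :
    ((D.contractArc e).ends f).2 = (D.ends f).2 := by
  simp [contractArc, show (D.ends e).1 ≠ (D.ends e).2 from hne,
    ((mem_contractArc_A hne).1 hf).2.2]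

/-- Merging `v` into `u` is injective on the tails of contracted arcs, none of which is `u`. -/
theorem degOK_contractArc_iff (hne : ¬ D.IsLoop e) (hF : F ⊆ (D.contractArc e).A) :
    DegOK (D.contractArc e) F ↔ DegOK D F := by
  have hfst : Set.EqOn (fun a => ((D.contractArc e).ends a).1)
      ((fun w => if w = (D.ends e).2 then (D.ends e).1 else w) ∘ fun a => (D.ends a).1) F :=
    fun a _ => contractArc_ends_fst hne a
  have hsnd : Set.EqOn (fun a => ((D.contractArc e).ends a).2) (fun a => (D.ends a).2) F :=
    fun a ha => contractArc_ends_snd hne (hF ha)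
  have hmerge : Set.InjOn (fun w => if w = (D.ends e).2 then (D.ends e).1 else w)
      ((fun a => (D.ends a).1) '' F) := by
    rintro _ ⟨x, hx, rfl⟩ _ ⟨y, hy, rfl⟩ hxy
    have hxu := ((mem_contractArc_A hne).1 (hF hx)).2.1
    have hyu := ((mem_contractArc_A hne).1 (hF hy)).2.1
    simp only at hxy
    split_ifs at hxy <;> simp_all
  rw [degOK_iff_injOn, degOK_iff_injOn, hfst.injOn_iff, hsnd.injOn_iff]
  exact and_congr_left' ⟨Set.InjOn.of_comp, fun h => hmerge.comp h (Set.mapsTo_image _ _)⟩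

theorem SuccClosed.of_contractArc (hne : ¬ D.IsLoop e) (hC : C ⊆ (D.contractArc e).A)
    (h : (D.contractArc e).SuccClosed C) : D.SuccClosed C ∨ D.SuccClosed (insert e C) := by
  have hsucc : ∀ a ∈ C, ∃ b ∈ C, (if (D.ends b).1 = (D.ends e).2 then (D.ends e).1
      else (D.ends b).1) = (D.ends a).2 := fun a ha => by
    obtain ⟨b, hb, hab⟩ := h a ha
    rw [contractArc_ends_fst hne, contractArc_ends_snd hne (hC ha)] at hab
    exact ⟨b, hb, hab⟩
  by_cases hv : ∃ c ∈ C, (D.ends c).1 = (D.ends e).2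
  · right
    intro a ha
    rcases Finset.mem_insert.1 ha with rfl | ha
    · obtain ⟨c, hc, hcv⟩ := hv
      exact ⟨c, Finset.mem_insert_of_mem hc, hcv⟩
    · obtain ⟨b, hb, hab⟩ := hsucc a ha
      split_ifs at hab with hbv
      · exact ⟨e, Finset.mem_insert_self _ _, hab⟩
      · exact ⟨b, Finset.mem_insert_of_mem hb, hab⟩
  · left
    push Not at hv
    intro a ha
    obtain ⟨b, hb, hab⟩ := hsucc a ha
    rw [if_neg (hv b hb)] at hab
    exact ⟨b, hb, hab⟩

theorem SuccClosed.contractArc_erase (hne : ¬ D.IsLoop e)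
    (hC : C.erase e ⊆ (D.contractArc e).A) (h : D.SuccClosed C) :
    (D.contractArc e).SuccClosed (C.erase e) := by
  intro a ha
  have hav : (D.ends a).2 ≠ (D.ends e).2 := ((mem_contractArc_A hne).1 (hC ha)).2.2
  rw [contractArc_ends_snd hne (hC ha)]
  obtain ⟨b, hb, hab⟩ := h a (Finset.mem_of_mem_erase ha)
  by_cases hbe : b = e
  · subst hbe
    obtain ⟨c, hc, hcv⟩ := h b hb
    have hcb : c ≠ b := by rintro rfl; exact hne hcv
    refine ⟨c, Finset.mem_erase.2 ⟨hcb, hc⟩, ?_⟩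
    rw [contractArc_ends_fst hne, if_pos hcv, hab]
  · exact ⟨b, Finset.mem_erase.2 ⟨hbe, hb⟩, by
      rw [contractArc_ends_fst hne, if_neg (hab ▸ hav), hab]⟩

theorem SuccClosed.erase_nonempty (hne : ¬ D.IsLoop e) (h : D.SuccClosed C) (hC : C.Nonempty) :
    (C.erase e).Nonempty := by
  obtain ⟨a, ha⟩ := hC
  by_cases hae : a = e
  · subst hae
    obtain ⟨b, hb, hba⟩ := h a ha
    exact ⟨b, Finset.mem_erase.2 ⟨by rintro rfl; exact hne hba, hb⟩⟩
  · exact ⟨a, Finset.mem_erase.2 ⟨hae, ha⟩⟩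

end Contraction

section PathForests

variable {D : MDigraph} {e : ℕ} {F : Finset ℕ}

theorem pathForests_delArc : (D.delArc e).pathForests = D.pathForests.filter (e ∉ ·) := by
  ext F
  simp only [Finset.mem_filter, mem_pathForests]
  show F ⊆ D.A.erase e ∧ DegOK D F ∧ D.IsAcyclic F ↔ _
  rw [Finset.subset_erase]
  tauto

theorem IsLoop.notMem_of_mem_pathForests (hloop : D.IsLoop e) (hF : F ∈ D.pathForests) :
    e ∉ F := fun heF =>
  (mem_pathForests.1 hF).2.2 {e} (Finset.singleton_subset_iff.2 heF)
    (Finset.singleton_nonempty e) (by simpa [SuccClosed, IsLoop] using hloop)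

theorem insert_mem_pathForests_iff (hne : ¬ D.IsLoop e) (he : e ∈ D.A) (heF : e ∉ F) :
    insert e F ∈ D.pathForests ↔ F ∈ (D.contractArc e).pathForests := by
  rw [mem_pathForests, mem_pathForests]
  constructor
  · rintro ⟨hsub, hdeg, hac⟩
    have hinj := degOK_iff_injOn.1 hdeg
    have hFc : F ⊆ (D.contractArc e).A := fun f hf =>
      (mem_contractArc_A hne).2 ⟨hsub (Finset.mem_insert_of_mem hf),
        fun h => heF (hinj.1 (by simp [hf]) (by simp) h ▸ hf),
        fun h => heF (hinj.2 (by simp [hf]) (by simp) h ▸ hf)⟩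
    refine ⟨hFc, (degOK_contractArc_iff hne hFc).2 (hdeg.mono (Finset.subset_insert _ _)), ?_⟩
    intro C hCF hC hcl
    rcases hcl.of_contractArc hne (hCF.trans hFc) with hcl | hcl
    · exact hac C (hCF.trans (Finset.subset_insert _ _)) hC hcl
    · exact hac _ (Finset.insert_subset_insert _ hCF) (Finset.insert_nonempty _ _) hcl
  · rintro ⟨hFc, hdeg, hac⟩
    have hFA : F ⊆ D.A := fun f hf => ((mem_contractArc_A hne).1 (hFc hf)).1
    refine ⟨Finset.insert_subset he hFA, ?_, ?_⟩
    · obtain ⟨h₁, h₂⟩ := degOK_iff_injOn.1 ((degOK_contractArc_iff hne hFc).1 hdeg)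
      rw [degOK_iff_injOn, Finset.coe_insert, Set.injOn_insert (by simpa using heF),
        Set.injOn_insert (by simpa using heF)]
      refine ⟨⟨h₁, ?_⟩, ⟨h₂, ?_⟩⟩ <;> rintro ⟨f, hf, hfe⟩
      · exact ((mem_contractArc_A hne).1 (hFc hf)).2.1 hfe
      · exact ((mem_contractArc_A hne).1 (hFc hf)).2.2 hfe
    · intro C hCF hC hcl
      have hCe : C.erase e ⊆ F := Finset.subset_insert_iff.1 hCF
      exact hac _ hCe (hcl.erase_nonempty hne hC) (hcl.contractArc_erase hne (hCe.trans hFc))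

theorem filter_mem_pathForests (hne : ¬ D.IsLoop e) (he : e ∈ D.A) :
    D.pathForests.filter (e ∈ ·) = (D.contractArc e).pathForests.image (insert e) := by
  ext F
  simp only [Finset.mem_filter, Finset.mem_image]
  constructor
  · rintro ⟨hF, heF⟩
    refine ⟨F.erase e, (insert_mem_pathForests_iff hne he (Finset.notMem_erase e F)).1 ?_,
      Finset.insert_erase heF⟩
    rwa [Finset.insert_erase heF]
  · rintro ⟨F', hF', rfl⟩
    have heF' : e ∉ F' := fun h => notMem_contractArc_A hne ((mem_pathForests.1 hF').1 h)
    exact ⟨(insert_mem_pathForests_iff hne he heF').2 hF', Finset.mem_insert_self _ _⟩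

end PathForests

section Weights

variable {D : MDigraph} {e : ℕ} {F : Finset ℕ}

/-- In `D.contractArc e` the merged vertex is the tail of the arcs with tail `(D.ends e).2`
and the head of the arcs with head `(D.ends e).1`; `F` uses none of them. -/
def MissesMerged (D : MDigraph) (e : ℕ) (F : Finset ℕ) : Prop :=
  ∀ f ∈ F, (D.ends f).1 ≠ (D.ends e).2 ∧ (D.ends f).2 ≠ (D.ends e).1

theorem kpF_insert_contractArc (hne : ¬ D.IsLoop e) (hF : F ⊆ (D.contractArc e).A) :
    kpF D (insert e F) = kpF (D.contractArc e) F + if D.MissesMerged e F then 1 else 0 := by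
  have hfst : F.image (fun a => ((D.contractArc e).ends a).1) =
      (F.image fun a => (D.ends a).1).image
        (fun w => if w = (D.ends e).2 then (D.ends e).1 else w) := by
    rw [Finset.image_image]
    exact Finset.image_congr fun a _ => contractArc_ends_fst hne a
  have hsnd : F.image (fun a => ((D.contractArc e).ends a).2) = F.image fun a => (D.ends a).2 :=
    Finset.image_congr fun a ha => contractArc_ends_snd hne (hF ha)
  have hu : (D.ends e).1 ∉ F.image fun a => (D.ends a).1 := by
    simpa using fun f hf => ((mem_contractArc_A hne).1 (hF hf)).2.1
  have hmiss : ((D.ends e).2 ∉ F.image fun a => (D.ends a).1) ∧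
      ((D.ends e).1 ∉ F.image fun a => (D.ends a).2) ↔ D.MissesMerged e F := by
    simp only [Finset.mem_image, not_exists, not_and, MissesMerged]
    exact ⟨fun h f hf => ⟨h.1 f hf, h.2 f hf⟩, fun h => ⟨fun f hf => (h f hf).1,
      fun f hf => (h f hf).2⟩⟩
  rw [kpF_eq_card_sdiff, kpF_eq_card_sdiff, Finset.image_insert, Finset.image_insert, hfst, hsnd,
    Finset.card_insert_sdiff_insert hne hu]
  simp only [hmiss]

theorem pathWeight_insert (hne : ¬ D.IsLoop e) (hF : F ⊆ (D.contractArc e).A) (heF : e ∉ F) :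
    D.pathWeight (insert e F) = MvPolynomial.X 0 * (D.contractArc e).pathWeight F +
      if D.MissesMerged e F then
        MvPolynomial.X 0 * (MvPolynomial.X 1 - 1) * (D.contractArc e).pathWeight F
      else 0 := by
  unfold pathWeight
  rw [Finset.card_insert_of_notMem heF, kpF_insert_contractArc hne hF]
  split_ifs <;> ring

theorem subset_extractArc_A_iff (hne : ¬ D.IsLoop e) :
    F ⊆ (D.extractArc e).A ↔ F ⊆ (D.contractArc e).A ∧ D.MissesMerged e F := by
  simp only [Finset.subset_iff, mem_contractArc_A hne, MissesMerged, extractArc,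
    Finset.mem_filter]
  grind

theorem contractArc_ends_eq_of_missesMerged (hne : ¬ D.IsLoop e)
    (hF : F ⊆ (D.contractArc e).A) (hmiss : D.MissesMerged e F) :
    ∀ f ∈ F, (D.contractArc e).ends f = (D.extractArc e).ends f := fun f hf =>
  Prod.ext (by rw [contractArc_ends_fst hne, if_neg (hmiss f hf).1]; rfl)
    (contractArc_ends_snd hne (hF hf))

theorem sum_pathWeight_filter_missesMerged (hne : ¬ D.IsLoop e) :
    ∑ F ∈ (D.contractArc e).pathForests.filter (D.MissesMerged e),
      (D.contractArc e).pathWeight F = (D.extractArc e).biPathPoly := by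
  have hforests : (D.contractArc e).pathForests.filter (D.MissesMerged e) =
      (D.extractArc e).pathForests := by
    ext F
    rw [Finset.mem_filter, mem_pathForests, mem_pathForests, subset_extractArc_A_iff hne]
    constructor
    · rintro ⟨⟨hF, hdeg, hac⟩, hmiss⟩
      have h := contractArc_ends_eq_of_missesMerged hne hF hmiss
      exact ⟨⟨hF, hmiss⟩, (degOK_congr h).1 hdeg, (isAcyclic_congr h).1 hac⟩
    · rintro ⟨⟨hF, hmiss⟩, hdeg, hac⟩
      have h := contractArc_ends_eq_of_missesMerged hne hF hmiss
      exact ⟨⟨hF, (degOK_congr h).2 hdeg, (isAcyclic_congr h).2 hac⟩, hmiss⟩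
  rw [biPathPoly_eq_sum, ← hforests]
  refine Finset.sum_congr rfl fun F hmem => ?_
  obtain ⟨hF, hmiss⟩ := Finset.mem_filter.1 hmem
  rw [pathWeight, pathWeight,
    kpF_congr (contractArc_ends_eq_of_missesMerged hne (mem_pathForests.1 hF).1 hmiss)]

theorem sum_pathWeight_filter_notMem :
    ∑ F ∈ D.pathForests.filter (e ∉ ·), D.pathWeight F = (D.delArc e).biPathPoly := by
  rw [biPathPoly_eq_sum, pathForests_delArc]
  rfl

theorem sum_pathWeight_filter_mem (hne : ¬ D.IsLoop e) (he : e ∈ D.A) :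
    ∑ F ∈ D.pathForests.filter (e ∈ ·), D.pathWeight F =
      MvPolynomial.X 0 * (D.contractArc e).biPathPoly +
        MvPolynomial.X 0 * (MvPolynomial.X 1 - 1) * (D.extractArc e).biPathPoly := by
  have hsub : ∀ F ∈ (D.contractArc e).pathForests, F ⊆ (D.contractArc e).A :=
    fun F hF => (mem_pathForests.1 hF).1
  have heF : ∀ F ∈ (D.contractArc e).pathForests, e ∉ F :=
    fun F hF h => notMem_contractArc_A hne (hsub F hF h)
  have hinj : Set.InjOn (insert e) ((D.contractArc e).pathForests : Set (Finset ℕ)) :=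
    fun F hF G hG h => by
      rw [← Finset.erase_insert (heF F hF), h, Finset.erase_insert (heF G hG)]
  rw [filter_mem_pathForests hne he, Finset.sum_image hinj,
    Finset.sum_congr rfl fun F hF => pathWeight_insert hne (hsub F hF) (heF F hF),
    Finset.sum_add_distrib, ← Finset.mul_sum, ← Finset.sum_filter, ← Finset.mul_sum,
    sum_pathWeight_filter_missesMerged hne, ← biPathPoly_eq_sum]

end Weights

end MDigraph

theorem biPathPoly_recurrence_general (D : MDigraph)
    (e : ℕ) (he : e ∈ D.A) :
    (D.IsLoop e → D.biPathPoly = (D.delArc e).biPathPoly) ∧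
      (¬ D.IsLoop e → D.biPathPoly = (D.delArc e).biPathPoly +
        MvPolynomial.X 0 * (D.contractArc e).biPathPoly +
        MvPolynomial.X 0 * (MvPolynomial.X 1 - 1) * (D.extractArc e).biPathPoly) := by
  constructor
  · intro hloop
    rw [← MDigraph.sum_pathWeight_filter_notMem,
      Finset.filter_true_of_mem fun F hF => hloop.notMem_of_mem_pathForests hF,
      MDigraph.biPathPoly_eq_sum]
  · intro hne
    rw [MDigraph.biPathPoly_eq_sum, ← Finset.sum_filter_not_add_sum_filter _ (e ∈ ·),
      MDigraph.sum_pathWeight_filter_notMem, MDigraph.sum_pathWeight_filter_mem hne he, add_assoc]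

/-- for an arc `e` of `D`: if `e` is a loop then
`π̂(D;x,y) = π̂(D_{-e};x,y)`; otherwise
`π̂(D;x,y) = π̂(D_{-e};x,y) + x·π̂(D_{/e};x,y) + x·(y−1)·π̂(D_{†e};x,y)`. -/
theorem biPathPoly_recurrence (D : MDigraph) (hwf : D.WellFormed)
    (e : ℕ) (he : e ∈ D.A) :
    (D.IsLoop e → D.biPathPoly = (D.delArc e).biPathPoly) ∧
      (¬ D.IsLoop e → D.biPathPoly = (D.delArc e).biPathPoly +
        MvPolynomial.X 0 * (D.contractArc e).biPathPoly +
        MvPolynomial.X 0 * (MvPolynomial.X 1 - 1) * (D.extractArc e).biPathPoly) :=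
  biPathPoly_recurrence_general D e he
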